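/- Let N be a finite set with n ≥ 1 elements, let L be a partition of N (the labels), let C be a partition of N, and let C' be a partition of N refining C. Set ΔI = I(C';L) − I(C;L) and ΔH = H(C') − H(C), and assume ΔH > 0 and H(C) + H(L) > 0 and H(C') + H(L) > 0. Then NMI(C';L) > NMI(C;L) if and only if ΔI/ΔH > NMI(C;L)/2. -/
import Mathlib


open Finset

/-- Entropy of a partition of a finite set:
`H(P) = -∑_i (n_i/n) * log (n_i/n)`. -/
noncomputable def partitionEntropy {N : Type*} [Fintype N] [DecidableEq N]
    (P : Finpartition (Finset.univ : Finset N)) : ℝ :=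
  ∑ p ∈ P.parts,
    -(((p.card : ℝ) / (Fintype.card N : ℝ)) *
      Real.log ((p.card : ℝ) / (Fintype.card N : ℝ)))

/-- Mutual information between two partitions of a finite set:
`I(P;Q) = ∑_{i,j} (n_{ij}/n) * log (n * n_{ij} / (n_i * n_j))`,
where terms with `n_{ij} = 0` vanish (in Lean, `log 0 = 0`). -/
noncomputable def mutualInfo {N : Type*} [Fintype N] [DecidableEq N]
    (P Q : Finpartition (Finset.univ : Finset N)) : ℝ :=
  ∑ p ∈ P.parts, ∑ q ∈ Q.parts,
    (((p ∩ q).card : ℝ) / (Fintype.card N : ℝ)) *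
      Real.log ((Fintype.card N : ℝ) * ((p ∩ q).card : ℝ) /
        ((p.card : ℝ) * (q.card : ℝ)))

/-- Normalized mutual information: `NMI(P;Q) = 2 I(P;Q) / (H(P) + H(Q))`. -/
noncomputable def nmi {N : Type*} [Fintype N] [DecidableEq N]
    (P Q : Finpartition (Finset.univ : Finset N)) : ℝ :=
  2 * mutualInfo P Q / (partitionEntropy P + partitionEntropy Q)

/-- **NMI refinement condition.**
If `C'` refines `C`, `ΔI = I(C';L) − I(C;L)`, `ΔH = H(C') − H(C) > 0`, and the
entropy denominators are positive, then
`NMI(C';L) > NMI(C;L) ↔ ΔI/ΔH > NMI(C;L)/2`. -/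
theorem nmi_refinement_condition {N : Type*} [Fintype N] [DecidableEq N]
    (hn : 1 ≤ Fintype.card N)
    (L C C' : Finpartition (Finset.univ : Finset N))
    (href : ∀ b ∈ C'.parts, ∃ c ∈ C.parts, b ⊆ c)
    (hΔH : partitionEntropy C' - partitionEntropy C > 0)
    (hden : partitionEntropy C + partitionEntropy L > 0)
    (hden' : partitionEntropy C' + partitionEntropy L > 0) :
    nmi C' L > nmi C L ↔
      (mutualInfo C' L - mutualInfo C L) /
          (partitionEntropy C' - partitionEntropy C) > nmi C L / 2 := by
  set a := mutualInfo C' L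
  set b := mutualInfo C L
  set h := partitionEntropy C
  set h' := partitionEntropy C'
  set l := partitionEntropy L
  unfold nmi
  rw [gt_iff_lt, gt_iff_lt, div_lt_div_iff₀ hden hden', div_div,
    div_lt_div_iff₀ (by linarith) hΔH]
  constructor <;> intro H <;> nlinarith
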